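/- Let j ≥ 2. For every integer r with 0 ≤ r ≤ 2j−3 there exist a, b ∈ ℂ^{2j−3} such that the (4j−6) × (2j−3) stacked triangular Hankel matrix N(a,b) has rank exactly r. Consequently every cokernel dimension (stalk rank of the quantum moduli space) between 2j−3 and 4j−6 occurs. -/

import Mathlib

/-- The `n × n` triangular Hankel matrix of the vector `a = (a₀, …, a_{n−1})`:
its `(i, m)` entry is `a_{i+m}` when `i + m ≤ n − 1`, and `0` otherwise. -/
def triHankel {n : ℕ} (a : Fin n → ℂ) : Matrix (Fin n) (Fin n) ℂ :=
  fun i m => if h : (i : ℕ) + (m : ℕ) < n then a ⟨(i : ℕ) + (m : ℕ), h⟩ else 0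

/-- For `a, b ∈ ℂⁿ`, the `2n × n` matrix obtained by stacking the triangular Hankel
matrices `H(a)` and `H(b)`. -/
def stackedTriHankel {n : ℕ} (a b : Fin n → ℂ) : Matrix (Fin n ⊕ Fin n) (Fin n) ℂ :=
  Matrix.fromRows (triHankel a) (triHankel b)

/-! Take `a = e_{r-1}` and `b = 0`. Then `N(a, b)` has the rank of `H(e_{r-1})`, which is the
`r × r` exchange matrix `J` sitting in the upper left corner. Its square is the diagonal
projection `D` onto the first `r` coordinates and `J * D = J`, so `rank J = rank D = r`. -/

namespace Matrix

theorem rank_fromRows_zero {m₁ m₂ n R : Type*} [Fintype m₁] [DecidableEq m₁] [Fintype n]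
    [CommSemiring R] [StrongRankCondition R] (A : Matrix m₁ n R) :
    (fromRows A (0 : Matrix m₂ n R)).rank = A.rank := by
  apply le_antisymm
  · calc (fromRows A (0 : Matrix m₂ n R)).rank
        = (fromRows (1 : Matrix m₁ m₁ R) 0 * A).rank := by
          rw [fromRows_mul, Matrix.one_mul, Matrix.zero_mul]
      _ ≤ A.rank := rank_mul_le_right _ _
  · exact rank_submatrix_le (fromRows A (0 : Matrix m₂ n R)) Sum.inl id

section ExchangeBlock

variable {K : Type*} [Field K] {n : ℕ}

def exchangeBlock (n r : ℕ) : Matrix (Fin n) (Fin n) K :=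
  of fun i m => if (i : ℕ) + m + 1 = r then 1 else 0

theorem exchangeBlock_mul_self {r : ℕ} (hr : r ≤ n) :
    exchangeBlock n r * exchangeBlock n r =
      diagonal fun i : Fin n => if (i : ℕ) < r then (1 : K) else 0 := by
  ext i k
  simp only [exchangeBlock, mul_apply, of_apply, diagonal_apply, mul_ite, mul_one, mul_zero]
  by_cases hi : (i : ℕ) < r
  · rw [Finset.sum_eq_single ⟨r - 1 - i, by omega⟩]
    · simp only [Fin.ext_iff]
      split_ifs <;> first | rfl | omega
    · intro j _ hj
      have : (i : ℕ) + j + 1 ≠ r := fun h => hj (Fin.ext (by simp; omega))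
      simp [this]
    · simp
  · refine (Finset.sum_eq_zero fun j _ => ?_).trans (by simp [hi])
    have : (i : ℕ) + j + 1 ≠ r := by omega
    simp [this]

theorem exchangeBlock_mul_diagonal (r : ℕ) :
    exchangeBlock n r * diagonal (fun i : Fin n => if (i : ℕ) < r then (1 : K) else 0) =
      exchangeBlock n r := by
  ext i m
  simp only [exchangeBlock, mul_diagonal, of_apply]
  split_ifs <;> first | rfl | omega | simp

theorem rank_exchangeBlock {r : ℕ} (hr : r ≤ n) :
    (exchangeBlock n r : Matrix (Fin n) (Fin n) K).rank = r := by
  classical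
  set D : Matrix (Fin n) (Fin n) K := diagonal fun i => if (i : ℕ) < r then 1 else 0
  have hD : D.rank = r := by
    rw [rank_diagonal]
    simpa using Fintype.card_fin_lt_of_le hr
  apply le_antisymm
  · calc (exchangeBlock n r : Matrix (Fin n) (Fin n) K).rank
        = (exchangeBlock n r * D).rank := by rw [exchangeBlock_mul_diagonal]
      _ ≤ r := (rank_mul_le_right _ _).trans hD.le
  · calc r = (exchangeBlock n r * exchangeBlock n r : Matrix (Fin n) (Fin n) K).rank := by
          rw [exchangeBlock_mul_self hr, hD]
      _ ≤ _ := rank_mul_le_left _ _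

end ExchangeBlock

end Matrix

@[simp]
theorem triHankel_zero {n : ℕ} : triHankel (0 : Fin n → ℂ) = 0 := by
  ext i m
  simp [triHankel]

theorem triHankel_indicator_eq_exchangeBlock {n r : ℕ} (hr : r ≤ n) :
    triHankel (fun k : Fin n => if (k : ℕ) + 1 = r then (1 : ℂ) else 0) =
      Matrix.exchangeBlock n r := by
  ext i m
  simp only [triHankel, Matrix.exchangeBlock, Matrix.of_apply]
  split_ifs <;> first | rfl | omega

theorem stackedTriHankel_W2_rank_surjective_general (j : ℕ) (r : ℕ)
    (hr : r ≤ 2 * j - 3) :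
    ∃ a b : Fin (2 * j - 3) → ℂ, (stackedTriHankel a b).rank = r := by
  refine ⟨fun k => if (k : ℕ) + 1 = r then 1 else 0, 0, ?_⟩
  rw [stackedTriHankel, triHankel_zero, Matrix.rank_fromRows_zero,
    triHankel_indicator_eq_exchangeBlock hr, Matrix.rank_exchangeBlock hr]

/-- For `j ≥ 2` and every integer `r` with `0 ≤ r ≤ 2j−3`, there exist `a, b ∈ ℂ^{2j−3}` such
that the `(4j−6) × (2j−3)` stacked triangular Hankel matrix `N(a,b)` has rank exactly `r`;
consequently every cokernel dimension between `2j−3` and `4j−6` occurs. -/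
theorem stackedTriHankel_W2_rank_surjective (j : ℕ) (hj : 2 ≤ j) (r : ℕ)
    (hr : r ≤ 2 * j - 3) :
    ∃ a b : Fin (2 * j - 3) → ℂ, (stackedTriHankel a b).rank = r :=
  stackedTriHankel_W2_rank_surjective_general j r hr
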